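/- Define f₂ = xz − y², f₃ = (cx + y)f₂ + x³, and f₅ = (2x²(cx + y) + (c²x + 2cy + z)f₂)f₂ + x⁵. Then the rational map h : ℙ² → ℙ² given by (x : y : z) ↦ (x f₂² : −f₃ f₂ : f₅) is a birational involution: the composition h ∘ h is the identity as a rational map, i.e., there is a polynomial g with (x f₂², −f₃f₂, f₅) evaluated at (x f₂² : −f₃f₂ : f₅) equal to (g·x, g·y, g·z) componentwise. -/

import Mathlib

open MvPolynomial

/-- `f₂ = xz − y²` as a polynomial in `ℂ[x, y, z]`. -/
noncomputable def f2P : MvPolynomial (Fin 3) ℂ := X 0 * X 2 - (X 1) ^ 2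

/-- `f₃ = (cx + y)f₂ + x³`. -/
noncomputable def f3P (c : ℂ) : MvPolynomial (Fin 3) ℂ :=
  (C c * X 0 + X 1) * f2P + (X 0) ^ 3

/-- `f₅ = (2x²(cx + y) + (c²x + 2cy + z)f₂)f₂ + x⁵`. -/
noncomputable def f5P (c : ℂ) : MvPolynomial (Fin 3) ℂ :=
  (C 2 * (X 0) ^ 2 * (C c * X 0 + X 1) + (C (c ^ 2) * X 0 + C (2 * c) * X 1 + X 2) * f2P) * f2P
    + (X 0) ^ 5

/-!
Everything follows from `h^* f₂ = f₂⁵`: feeding it into the definitions of `f₃` and `f₅` gives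
`h^* f₃ = −y f₂⁷` and `h^* f₅ = z f₂¹²`, so `h ∘ h = f₂¹² · (x, y, z)`.
-/

noncomputable abbrev hMap (c : ℂ) : Fin 3 → MvPolynomial (Fin 3) ℂ :=
  ![X 0 * f2P ^ 2, -(f3P c * f2P), f5P c]

theorem aeval_hMap_f2P (c : ℂ) : aeval (hMap c) f2P = f2P ^ 5 := by
  conv_lhs => rw [f2P]
  simp only [map_sub, map_mul, map_pow, aeval_X, hMap, Matrix.cons_val]
  simp only [f2P, f3P, f5P, C_mul, C_pow, map_ofNat]
  ring

theorem aeval_hMap_f3P (c : ℂ) : aeval (hMap c) (f3P c) = -(X 1 * f2P ^ 7) := by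
  conv_lhs => rw [f3P]
  simp only [map_add, map_mul, map_pow, aeval_X, aeval_C, algebraMap_eq, aeval_hMap_f2P, hMap,
    Matrix.cons_val]
  simp only [f3P]
  ring

theorem aeval_hMap_f5P (c : ℂ) : aeval (hMap c) (f5P c) = X 2 * f2P ^ 12 := by
  conv_lhs => rw [f5P]
  simp only [map_add, map_mul, map_pow, aeval_X, aeval_C, algebraMap_eq, aeval_hMap_f2P, hMap,
    Matrix.cons_val]
  simp only [f3P, f5P, C_mul, C_pow, map_ofNat]
  ring

/-- the rational map `h = (x f₂² : −f₃ f₂ : f₅)` is a birational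
involution: substituting `X = xf₂²`, `Y = −f₃f₂`, `Z = f₅` into the three
component polynomials yields a common polynomial factor `g` times `x`, `y`, `z`
respectively, so `h ∘ h` is the identity as a rational map. -/
theorem h_is_involution (c : ℂ) :
    ∃ g : MvPolynomial (Fin 3) ℂ,
      aeval ![X 0 * f2P ^ 2, -(f3P c * f2P), f5P c] (X 0 * f2P ^ 2) = g * X 0 ∧
      aeval ![X 0 * f2P ^ 2, -(f3P c * f2P), f5P c] (-(f3P c * f2P)) = g * X 1 ∧
      aeval ![X 0 * f2P ^ 2, -(f3P c * f2P), f5P c] (f5P c) = g * X 2 := by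
  refine ⟨f2P ^ 12, ?_, ?_, ?_⟩
  · rw [map_mul, map_pow, aeval_X, aeval_hMap_f2P]
    simp only [Matrix.cons_val_zero]
    ring
  · rw [map_neg, map_mul, aeval_hMap_f3P, aeval_hMap_f2P]
    ring
  · rw [aeval_hMap_f5P, mul_comm]
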